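/- arXiv:2112.08297 — 4 statements merged into one kernel-verified Lean document; each statement's English description precedes it below -/
import Mathlib

section
/- Leave-one-out identity for kernel ridge regression: let K ∈ R^{n×n} be symmetric positive semi-definite, λ > 0, M = (K + λI)^{-1}, let k_{-i} denote the i-th column of M and k_{-ii} its (i,i) entry. Define f(x_j) = e_j^T K M Y for the full predictor, and f^{\i}(x_i) = e_i^T K (M - k_{-i} k_{-i}^T / k_{-ii}) Y for the leave-one-out predictor. Then f^{\i}(x_i) - y_i = -(k_{-i}^T Y)/k_{-ii}. -/
open Matrix

theorem stmt1 {n : ℕ} (K : Matrix (Fin n) (Fin n) ℝ) (hK : K.IsSymm) (hPSD : K.PosSemidef)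
    (l : ℝ) (hl : 0 < l) (Y : Fin n → ℝ) (i : Fin n)
    (M : Matrix (Fin n) (Fin n) ℝ) (hM : M = (K + l • 1)⁻¹)
    (k : Fin n → ℝ) (hk : k = M *ᵥ Pi.single i 1)
    (kii : ℝ) (hkii : kii = Pi.single i 1 ⬝ᵥ M *ᵥ Pi.single i 1) (hkpos : 0 < kii) :
    Pi.single i 1 ⬝ᵥ K *ᵥ ((M - kii⁻¹ • vecMulVec k k) *ᵥ Y) - Y i = -(k ⬝ᵥ Y) / kii := by
  set A : Matrix (Fin n) (Fin n) ℝ := K + l • 1 with hA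
  have hApd : A.PosDef := by
    rw [Matrix.posDef_iff_dotProduct_mulVec]
    constructor
    · exact (hPSD.1.add (by simp [Matrix.IsHermitian, Matrix.conjTranspose_smul]))
    · intro x hx
      have h1 : (0:ℝ) ≤ x ⬝ᵥ K *ᵥ x := by simpa using (Matrix.posSemidef_iff_dotProduct_mulVec.mp hPSD).2 x
      have h2 : (0:ℝ) < l * (x ⬝ᵥ x) := by
        apply mul_pos hl
        have hxx : (0:ℝ) ≤ x ⬝ᵥ x :=
          Finset.sum_nonneg fun j _ => mul_self_nonneg _
        rcases hxx.lt_or_eq with h | h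
        · exact h
        · exact absurd (dotProduct_self_eq_zero.mp h.symm) hx
      have : A *ᵥ x = K *ᵥ x + l • x := by
        simp [hA, add_mulVec, smul_mulVec]
      rw [this]
      simp only [star_trivial, dotProduct_add, dotProduct_smul, smul_eq_mul]
      linarith
  have hAunit : IsUnit A.det := hApd.isUnit.map Matrix.detMonoidHom
  have hMA : M * A = 1 := by rw [hM]; exact Matrix.nonsing_inv_mul A hAunit
  have hAM : A * M = 1 := by rw [hM]; exact Matrix.mul_nonsing_inv A hAunit
  have hMsymm : Mᵀ = M := by
    have hAT : Aᵀ = A := by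
      rw [hA, Matrix.transpose_add, Matrix.transpose_smul, Matrix.transpose_one, hK]
    rw [hM, Matrix.transpose_nonsing_inv, hAT]
  -- K *ᵥ M *ᵥ w = w - l • (M *ᵥ w)
  have hKM : ∀ w : Fin n → ℝ, K *ᵥ (M *ᵥ w) = w - l • (M *ᵥ w) := by
    intro w
    have h2 : A *ᵥ (M *ᵥ w) = w := by
      rw [Matrix.mulVec_mulVec, hAM, Matrix.one_mulVec]
    rw [hA, add_mulVec, smul_mulVec, Matrix.one_mulVec] at h2
    linear_combination (norm := module) h2
  set e : Fin n → ℝ := Pi.single i 1 with he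
  have hMsym_dot : ∀ v w : Fin n → ℝ, v ⬝ᵥ M *ᵥ w = (M *ᵥ v) ⬝ᵥ w := by
    intro v w
    rw [Matrix.dotProduct_mulVec, ← Matrix.vecMul_transpose, hMsymm]
  set s : ℝ := kii⁻¹ * (k ⬝ᵥ Y) with hs
  have hvec : (M - kii⁻¹ • vecMulVec k k) *ᵥ Y = M *ᵥ (Y - s • e) := by
    have hvv : vecMulVec k k *ᵥ Y = (k ⬝ᵥ Y) • k := by
      ext x
      simp [Matrix.mulVec, Matrix.vecMulVec_apply, dotProduct, Finset.sum_mul,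
        Finset.mul_sum, mul_comm, mul_left_comm]
    rw [Matrix.sub_mulVec, Matrix.smul_mulVec, hvv,
      Matrix.mulVec_sub, Matrix.mulVec_smul, ← hk, hs]
    module
  rw [hvec, hKM]
  have hedot : ∀ w : Fin n → ℝ, e ⬝ᵥ w = w i := by
    intro w; simp [he, dotProduct, Pi.single_apply]
  rw [dotProduct_sub, dotProduct_smul, hMsym_dot, ← hk, hedot,
    Pi.sub_apply, Pi.smul_apply]
  have hei : e i = 1 := by simp [he]
  have hkY : k ⬝ᵥ (Y - s • e) = k ⬝ᵥ Y - s * kii := by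
    rw [dotProduct_sub, dotProduct_smul, smul_eq_mul]
    have : k ⬝ᵥ e = kii := by
      rw [hkii, hMsym_dot, ← hk]
    rw [this]
  rw [hkY, hei]
  have hkii0 : kii ≠ 0 := ne_of_gt hkpos
  field_simp [hs]
  rw [hs]
  linear_combination (-(k ⬝ᵥ Y) + kii * (k ⬝ᵥ Y) * l) * (mul_inv_cancel₀ hkii0)
end

section
/- With notation as in the leave-one-out identity, the full-data residual and leave-one-out residual satisfy f(x_i) - y_i = (f^{\i}(x_i) - y_i)·(1 - A_i), where A_i = e_i^T K (K + λI)^{-1} e_i, f(x_i) = e_i^T K (K+λI)^{-1} Y and f^{\i}(x_i) - y_i = -(k_{-i}^T Y)/k_{-ii}. -/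
open Matrix

theorem stmt2 {n : ℕ} (K : Matrix (Fin n) (Fin n) ℝ) (hK : K.IsSymm) (hPSD : K.PosSemidef)
    (l : ℝ) (hl : 0 < l) (Y : Fin n → ℝ) (i : Fin n)
    (M : Matrix (Fin n) (Fin n) ℝ) (hM : M = (K + l • 1)⁻¹)
    (k : Fin n → ℝ) (hk : k = M *ᵥ Pi.single i 1)
    (kii : ℝ) (hkii : kii = Pi.single i 1 ⬝ᵥ M *ᵥ Pi.single i 1) (hkpos : 0 < kii)
    (A : ℝ) (hA : A = Pi.single i 1 ⬝ᵥ (K * M) *ᵥ Pi.single i 1) :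
    Pi.single i 1 ⬝ᵥ K *ᵥ (M *ᵥ Y) - Y i = (-(k ⬝ᵥ Y) / kii) * (1 - A) := by
  have hPD : (K + l • 1).PosDef := by
    refine posDef_iff_dotProduct_mulVec.mpr ⟨hPSD.1.add ?_, fun x hx => ?_⟩
    · ext a b
      simp [Matrix.conjTranspose_apply, Matrix.one_apply, eq_comm]
    · have h1 := hPSD.dotProduct_mulVec_nonneg x
      have hxx : (0:ℝ) < x ⬝ᵥ x :=
        lt_of_le_of_ne (Finset.sum_nonneg fun j _ => mul_self_nonneg _)
          (fun h => hx (dotProduct_self_eq_zero.mp h.symm))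
      have : star x ⬝ᵥ (K + l • 1) *ᵥ x = star x ⬝ᵥ K *ᵥ x + l * (x ⬝ᵥ x) := by
        rw [add_mulVec, dotProduct_add, smul_mulVec, one_mulVec, dotProduct_smul]
        simp [star, dotProduct, mul_comm]
      rw [this]
      have : 0 < l * (x ⬝ᵥ x) := mul_pos hl hxx
      linarith
  have hdet : IsUnit (K + l • 1).det := isUnit_iff_ne_zero.mpr (ne_of_gt hPD.det_pos)
  have hMinv : (K + l • 1) * M = 1 := by
    rw [hM]; exact mul_nonsing_inv _ hdet
  have hKM : K * M = 1 - l • M := by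
    have : K * M + l • M = 1 := by
      calc K * M + l • M = (K + l • 1) * M := by rw [add_mul, smul_mul_assoc, one_mul]
        _ = 1 := hMinv
    linear_combination (norm := noncomm_ring) this
  have hMsymm : Mᵀ = M := by
    rw [hM, Matrix.transpose_nonsing_inv]
    congr 1
    rw [transpose_add, hK.eq, transpose_smul, transpose_one]
  -- compute each piece
  have hkY : k ⬝ᵥ Y = (M *ᵥ Y) i := by
    rw [hk]
    have h2 : M *ᵥ Pi.single i 1 = fun j => M i j := by
      funext j
      rw [mulVec_single]
      show M j i * 1 = M i j
      have h3 : M j i = Mᵀ i j := rfl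
      rw [h3, hMsymm, mul_one]
    rw [h2]
    simp [dotProduct, mulVec]
  have hkii' : kii = M i i := by
    rw [hkii]
    simp [mulVec_single, single_dotProduct]
  have hA' : A = 1 - l * M i i := by
    rw [hA, hKM]
    simp [mulVec_single, single_dotProduct, Matrix.sub_apply, one_apply, Matrix.smul_apply]
  have hLHS : Pi.single i 1 ⬝ᵥ K *ᵥ (M *ᵥ Y) - Y i = -(l * (M *ᵥ Y) i) := by
    rw [Matrix.mulVec_mulVec Y K M, hKM]
    simp [sub_mulVec, single_dotProduct, smul_mulVec]
  rw [hLHS, hkY, hA', hkii']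
  have hne : M i i ≠ 0 := by rw [← hkii']; exact ne_of_gt hkpos
  field_simp
  ring
end

section
/- Decomposition of the influence function: with K symmetric PSD, λ > 0, kernel test vector k_te ∈ R^n, define f(x_te) = k_te^T (K+λI)^{-1} Y, f^{\i}(x_te) = k_te^T ((K+λI)^{-1} - k_{-i}k_{-i}^T/k_{-ii}) Y, α = k_te^T (K+λI)^{-1} e_i, and Δf = f^{\i}(x_te) - f(x_te). Then Δf = α·(f^{\i}(x_i) - y_i) where f^{\i}(x_i) - y_i = -(k_{-i}^T Y)/k_{-ii}, and consequently (1/2)(f^{\i}(x_te)-y_te)^2 - (1/2)(f(x_te)-y_te)^2 = α(f(x_te)-y_te)(f^{\i}(x_i)-y_i) + (1/2)α^2(f^{\i}(x_i)-y_i)^2. -/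
open Matrix

lemma vecMulVec_dot {n : ℕ} (a b c d : Fin n → ℝ) :
    a ⬝ᵥ vecMulVec b c *ᵥ d = (a ⬝ᵥ b) * (c ⬝ᵥ d) := by
  simp only [dotProduct, mulVec, vecMulVec_apply, Finset.sum_mul, Finset.mul_sum]
  rw [Finset.sum_comm]
  congr 1; ext j; congr 1; ext i; ring

theorem stmt3 {n : ℕ} (K : Matrix (Fin n) (Fin n) ℝ) (hK : K.IsSymm) (hPSD : K.PosSemidef)
    (l : ℝ) (hl : 0 < l) (Y kte : Fin n → ℝ) (yte : ℝ) (i : Fin n)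
    (M : Matrix (Fin n) (Fin n) ℝ) (hM : M = (K + l • 1)⁻¹)
    (k : Fin n → ℝ) (hk : k = M *ᵥ Pi.single i 1)
    (kii : ℝ) (hkii : kii = Pi.single i 1 ⬝ᵥ M *ᵥ Pi.single i 1) (hkpos : 0 < kii)
    (f fli α s : ℝ)
    (hf : f = kte ⬝ᵥ M *ᵥ Y)
    (hfli : fli = kte ⬝ᵥ ((M - kii⁻¹ • vecMulVec k k) *ᵥ Y))
    (hα : α = kte ⬝ᵥ M *ᵥ Pi.single i 1)
    (hs : s = -(k ⬝ᵥ Y) / kii) :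
    fli - f = α * s ∧
    (1 / 2) * (fli - yte) ^ 2 - (1 / 2) * (f - yte) ^ 2
      = α * (f - yte) * s + (1 / 2) * α ^ 2 * s ^ 2 := by
  have key : fli - f = α * s := by
    rw [hfli, hf, hα, hs, sub_mulVec, dotProduct_sub, smul_mulVec,
      dotProduct_smul, smul_eq_mul, vecMulVec_dot, ← hk]
    field_simp
    ring
  refine ⟨key, ?_⟩
  have : fli = f + α * s := by linarith
  rw [this]; ring
end

section
/- For unit vectors x, x' ∈ R^d with ||x - x'||_2^2 ≤ 4r^2 (0 ≤ r ≤ 1/√2), the NTK feature distance satisfies K(x,x) + K(x',x') - 2K(x,x') ≤ 2r^2 + arccos(1 - 2r^2), where K(u,v) = u^T v (π - arccos(u^T v))/(2π). Equivalently, 1 - x^T x'(π - arccos(x^T x'))/π ≤ 2r^2 + arccos(1 - 2r^2). -/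
/-! With `t = ⟪x, x'⟫`, the left-hand side splits as `(1 - t) + t · arccos t / π`. For unit vectors
`1 - t = ‖x - x'‖² / 2 ≤ 2r²`, which also gives `t ≥ 1 - 2r²`; since `t ≤ 1 < π` and `arccos` is
antitone, the second term is at most `arccos t ≤ arccos (1 - 2r²)`. -/

open Real
open scoped RealInnerProductSpace

theorem one_sub_mul_pi_sub_arccos_div_pi (t : ℝ) :
    1 - t * (π - arccos t) / π = (1 - t) + t * arccos t / π := by
  field_simp [pi_ne_zero]
  ring

theorem mul_arccos_div_pi_le_arccos {t : ℝ} (ht : t ≤ 1) : t * arccos t / π ≤ arccos t := by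
  rw [div_le_iff₀ pi_pos]
  nlinarith [arccos_nonneg t, pi_gt_three]

theorem one_sub_two_mul_sq_le_inner_of_norm_sub_le {E : Type*} [NormedAddCommGroup E]
    [InnerProductSpace ℝ E] {x y : E} {r : ℝ} (hx : ‖x‖ = 1) (hy : ‖y‖ = 1)
    (h : ‖x - y‖ ≤ 2 * r) : 1 - 2 * r ^ 2 ≤ ⟪x, y⟫ := by
  have hsq : ‖x - y‖ ^ 2 ≤ (2 * r) ^ 2 := pow_le_pow_left₀ (norm_nonneg _) h 2
  rw [norm_sub_sq_real, hx, hy] at hsq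
  linarith

theorem stmt8_general {d : ℕ} (x x' : EuclideanSpace ℝ (Fin d)) (r : ℝ)
    (hx : ‖x‖ = 1) (hx' : ‖x'‖ = 1)
    (hdist : ‖x - x'‖ ≤ 2 * r) :
    1 - ⟪x, x'⟫ * (π - arccos ⟪x, x'⟫) / π ≤ 2 * r ^ 2 + arccos (1 - 2 * r ^ 2) := by
  have hlow := one_sub_two_mul_sq_le_inner_of_norm_sub_le hx hx' hdist
  have hup : ⟪x, x'⟫ ≤ 1 := by simpa [hx, hx'] using real_inner_le_norm x x'
  rw [one_sub_mul_pi_sub_arccos_div_pi]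
  have harccos : ⟪x, x'⟫ * arccos ⟪x, x'⟫ / π ≤ arccos (1 - 2 * r ^ 2) :=
    (mul_arccos_div_pi_le_arccos hup).trans (arccos_le_arccos hlow)
  linarith

theorem stmt8 {d : ℕ} (x x' : EuclideanSpace ℝ (Fin d)) (r : ℝ)
    (hx : ‖x‖ = 1) (hx' : ‖x'‖ = 1) (hr0 : 0 ≤ r) (hr : r ≤ 1 / Real.sqrt 2)
    (hdist : ‖x - x'‖ ≤ 2 * r) :
    1 - ⟪x, x'⟫ * (π - arccos ⟪x, x'⟫) / π ≤ 2 * r ^ 2 + arccos (1 - 2 * r ^ 2) :=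
  stmt8_general x x' r hx hx' hdist
end
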